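/- Let Z be a zero-mean random element with independent components in the d-dimensional subspace M_d, finite fourth moments, and Σ(Z) = P_{M_d}, and let U be unitary on M_d. Then for each i,j, the (k,l) off-diagonal (k ≠ l) entry of E{⟨UZ,φᵢ⟩⟨UZ,φⱼ⟩(Z⊗Z)} equals (ξ_{ik} ⊗ ξ_{jl}) + (ξ_{jk} ⊗ ξ_{il}), where ξᵢ = (ξ_{i1},...,ξ_{ip}) = U*φᵢ; consequently C^{ij}(UZ) = U D^{ij} U* for a diagonal matrix of operators D^{ij}. -/

import Mathlib

open scoped RealInnerProductSpace
open MeasureTheory ProbabilityTheory ContinuousLinearMap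

set_option synthInstance.maxHeartbeats 1000000
set_option maxHeartbeats 1000000

instance piLp_completeSpace {p : ℕ} (H : Fin p → Type*)
    [∀ i, UniformSpace (H i)] [∀ i, CompleteSpace (H i)] :
    CompleteSpace (PiLp 2 H) := inferInstance

/-!
Write `ξₐ = U* φₐ`, so that `⟨UZ, φₐ⟩ = ⟨Z, ξₐ⟩`. Embedding the components as `PiLp.single t (Z t)`
turns `Z` into a sum of independent mean-zero random vectors of one Hilbert space. Expanding
`E{⟨Z,ξᵢ⟩⟨Z,ξⱼ⟩⟨Z_k,f⟩⟨Z_l,g⟩}` over the components, a term in which some component occurs only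
once vanishes by independence and zero mean, so for `k ≠ l` only the pairings `(k,l)` and `(l,k)`
survive; each factor `E{⟨Z_k,(ξₐ)_k⟩⟨Z_k,f⟩}` equals `⟨(ξₐ)_k, f⟩` because `Σ(Z) = P` and
`P ξₐ = ξₐ`. For the second part, `E{⟨UZ,φᵢ⟩⟨UZ,φⱼ⟩ (UZ ⊗ UZ)} = U E{⟨Z,ξᵢ⟩⟨Z,ξⱼ⟩ (Z ⊗ Z)} U*`,
`P = U P U*` and `φᵢ ⊗ φⱼ = U (ξᵢ ⊗ ξⱼ) U*`. Hence
`D = E{⟨Z,ξᵢ⟩⟨Z,ξⱼ⟩ (Z ⊗ Z)} - δᵢⱼ P - ξᵢ ⊗ ξⱼ - ξⱼ ⊗ ξᵢ` works: its off-diagonal entries cancel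
by the first part, `P = Σ(Z)` being block diagonal.
-/

section RandomVectors

variable {Ω E : Type*} [MeasurableSpace Ω] {μ : Measure Ω}
  [NormedAddCommGroup E] [InnerProductSpace ℝ E]

lemma MeasureTheory.integrable_inner_mul_inner_mul_inner_mul_inner {X₁ X₂ X₃ X₄ : Ω → E}
    (h₁ : MemLp X₁ 4 μ) (h₂ : MemLp X₂ 4 μ) (h₃ : MemLp X₃ 4 μ) (h₄ : MemLp X₄ 4 μ)
    (a b c e : E) :
    Integrable (fun ω => ⟪X₁ ω, a⟫ * ⟪X₂ ω, b⟫ * (⟪X₃ ω, c⟫ * ⟪X₄ ω, e⟫)) μ := by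
  have : ENNReal.HolderTriple 4 4 2 := ⟨by
    rw [← two_mul, show (4 : ENNReal) = 2 * 2 by norm_num, ENNReal.mul_inv (by simp) (by simp),
      ← mul_assoc, ENNReal.mul_inv_cancel (by simp) (by simp), one_mul]⟩
  have h₁₂ : MemLp (fun ω => ⟪X₁ ω, a⟫ * ⟪X₂ ω, b⟫) 2 μ :=
    (h₂.inner_const b).mul' (h₁.inner_const a)
  have h₃₄ : MemLp (fun ω => ⟪X₃ ω, c⟫ * ⟪X₄ ω, e⟫) 2 μ :=
    (h₄.inner_const e).mul' (h₃.inner_const c)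
  exact h₁₂.integrable_mul h₃₄

namespace ProbabilityTheory

variable {ι : Type*} [MeasurableSpace E] {Y : ι → Ω → E}

section Independent

variable [OpensMeasurableSpace E]

lemma iIndepFun.integral_prod_inner_eq_zero [Fintype ι] {n : ℕ} (hY : iIndepFun Y μ)
    (hYm : ∀ t, AEMeasurable (Y t) μ) (hmean : ∀ t a, ∫ ω, ⟪Y t ω, a⟫ ∂μ = 0)
    (τ : Fin n → ι) (x : Fin n → E) {m₀ : Fin n} (hm₀ : ∀ m, m ≠ m₀ → τ m ≠ τ m₀) :
    ∫ ω, ∏ m, ⟪Y (τ m) ω, x m⟫ ∂μ = 0 := by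
  classical
  set g : ∀ t, E → ℝ := fun t y => ∏ m, if τ m = t then ⟪y, x m⟫ else 1
  have hprod : ∀ ω, ∏ m, ⟪Y (τ m) ω, x m⟫ = ∏ t, g t (Y t ω) := by
    intro ω
    simp only [g]
    rw [Finset.prod_comm]
    simp [Finset.prod_ite_eq]
  have hg : g (τ m₀) = fun y => ⟪y, x m₀⟫ := by
    funext y
    refine (Finset.prod_eq_single m₀ (fun m _ hm => if_neg (hm₀ m hm)) (by simp)).trans ?_
    simp
  simp_rw [hprod]
  rw [hY.integral_fun_prod_comp hYm fun t => ?_]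
  · exact Finset.prod_eq_zero (Finset.mem_univ (τ m₀)) (by rw [hg]; exact hmean _ _)
  · refine Continuous.aestronglyMeasurable (continuous_finsetProd _ fun m _ => ?_)
    split_ifs
    · exact continuous_id.inner continuous_const
    · exact continuous_const

lemma iIndepFun.integral_inner_mul_inner_eq_zero_of_ne (hY : iIndepFun Y μ)
    (hYm : ∀ t, AEMeasurable (Y t) μ) (hmean : ∀ t a, ∫ ω, ⟪Y t ω, a⟫ ∂μ = 0)
    {k l : ι} (hkl : k ≠ l) (a c : E) :
    ∫ ω, ⟪Y k ω, a⟫ * ⟪Y l ω, c⟫ ∂μ = 0 := by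
  rw [(hY.indepFun hkl).integral_fun_comp_mul_comp (hYm k) (hYm l)
    (f := fun y => ⟪y, a⟫) (g := fun y => ⟪y, c⟫) (by fun_prop) (by fun_prop), hmean, zero_mul]

lemma iIndepFun.integral_inner_mul_inner_mul_inner_mul_inner_of_ne [Fintype ι] [DecidableEq ι]
    (hY : iIndepFun Y μ) (hYm : ∀ t, AEMeasurable (Y t) μ) (hmean : ∀ t a, ∫ ω, ⟪Y t ω, a⟫ ∂μ = 0)
    {k l : ι} (hkl : k ≠ l) (r s : ι) (a b c e : E) :
    ∫ ω, ⟪Y r ω, a⟫ * ⟪Y s ω, b⟫ * (⟪Y k ω, c⟫ * ⟪Y l ω, e⟫) ∂μ =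
      (if r = k ∧ s = l then
        (∫ ω, ⟪Y k ω, a⟫ * ⟪Y k ω, c⟫ ∂μ) * ∫ ω, ⟪Y l ω, b⟫ * ⟪Y l ω, e⟫ ∂μ else 0) +
      (if r = l ∧ s = k then
        (∫ ω, ⟪Y l ω, a⟫ * ⟪Y l ω, e⟫ ∂μ) * ∫ ω, ⟪Y k ω, b⟫ * ⟪Y k ω, c⟫ ∂μ else 0) := by
  have hpair : ∀ {k l : ι}, k ≠ l → ∀ a b c e : E,
      ∫ ω, ⟪Y k ω, a⟫ * ⟪Y l ω, b⟫ * (⟪Y k ω, c⟫ * ⟪Y l ω, e⟫) ∂μ =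
        (∫ ω, ⟪Y k ω, a⟫ * ⟪Y k ω, c⟫ ∂μ) * ∫ ω, ⟪Y l ω, b⟫ * ⟪Y l ω, e⟫ ∂μ := by
    intro k l hkl a b c e
    rw [← (hY.indepFun hkl).integral_fun_comp_mul_comp (hYm k) (hYm l)
      (f := fun y => ⟪y, a⟫ * ⟪y, c⟫) (g := fun y => ⟪y, b⟫ * ⟪y, e⟫)
      (by fun_prop) (by fun_prop)]
    exact integral_congr_ae (.of_forall fun ω => by ring)
  by_cases h₁ : r = k ∧ s = l
  · obtain ⟨rfl, rfl⟩ := h₁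
    rw [if_pos ⟨rfl, rfl⟩, if_neg fun h => hkl h.1, add_zero, hpair hkl]
  by_cases h₂ : r = l ∧ s = k
  · obtain ⟨rfl, rfl⟩ := h₂
    rw [if_neg h₁, if_pos ⟨rfl, rfl⟩, zero_add, ← hpair hkl.symm]
    exact integral_congr_ae (.of_forall fun ω => by ring)
  rw [if_neg h₁, if_neg h₂, add_zero]
  -- some index among `r, s, k, l` occurs exactly once
  obtain ⟨m₀, hm₀⟩ : ∃ m₀ : Fin 4, ∀ m, m ≠ m₀ → ![r, s, k, l] m ≠ ![r, s, k, l] m₀ := by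
    simp only [Fin.exists_fin_succ, Fin.forall_fin_succ, Matrix.cons_val_zero,
      Matrix.cons_val_succ]
    grind
  simpa [Fin.prod_univ_four, mul_assoc] using
    hY.integral_prod_inner_eq_zero hYm hmean ![r, s, k, l] ![a, b, c, e] hm₀

end Independent

section Moments

variable [BorelSpace E] [Fintype ι]

lemma iIndepFun.integral_inner_sum_mul_inner (hY : iIndepFun Y μ) (hY2 : ∀ t, MemLp (Y t) 2 μ)
    (hmean : ∀ t a, ∫ ω, ⟪Y t ω, a⟫ ∂μ = 0) (a c : E) (t : ι) :
    ∫ ω, ⟪∑ r, Y r ω, a⟫ * ⟪Y t ω, c⟫ ∂μ = ∫ ω, ⟪Y t ω, a⟫ * ⟪Y t ω, c⟫ ∂μ := by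
  have hYm : ∀ t, AEMeasurable (Y t) μ := fun t => (hY2 t).aestronglyMeasurable.aemeasurable
  simp_rw [sum_inner, Finset.sum_mul]
  rw [integral_finsetSum _ fun r _ => ((hY2 r).inner_const a).integrable_mul
    ((hY2 t).inner_const c)]
  exact Finset.sum_eq_single t
    (fun r _ hrt => hY.integral_inner_mul_inner_eq_zero_of_ne hYm hmean hrt a c) (by simp)

lemma iIndepFun.integral_inner_sum_mul_inner_sum_mul_of_ne [DecidableEq ι] (hY : iIndepFun Y μ)
    (hY4 : ∀ t, MemLp (Y t) 4 μ) (hmean : ∀ t a, ∫ ω, ⟪Y t ω, a⟫ ∂μ = 0)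
    {k l : ι} (hkl : k ≠ l) (a b c e : E) :
    ∫ ω, ⟪∑ r, Y r ω, a⟫ * ⟪∑ s, Y s ω, b⟫ * (⟪Y k ω, c⟫ * ⟪Y l ω, e⟫) ∂μ =
      (∫ ω, ⟪Y k ω, a⟫ * ⟪Y k ω, c⟫ ∂μ) * (∫ ω, ⟪Y l ω, b⟫ * ⟪Y l ω, e⟫ ∂μ) +
      (∫ ω, ⟪Y l ω, a⟫ * ⟪Y l ω, e⟫ ∂μ) * ∫ ω, ⟪Y k ω, b⟫ * ⟪Y k ω, c⟫ ∂μ := by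
  have hYm : ∀ t, AEMeasurable (Y t) μ := fun t => (hY4 t).aestronglyMeasurable.aemeasurable
  have hint : ∀ r s, Integrable
      (fun ω => ⟪Y r ω, a⟫ * ⟪Y s ω, b⟫ * (⟪Y k ω, c⟫ * ⟪Y l ω, e⟫)) μ := fun r s =>
    integrable_inner_mul_inner_mul_inner_mul_inner (hY4 r) (hY4 s) (hY4 k) (hY4 l) a b c e
  simp_rw [sum_inner, Finset.sum_mul_sum, Finset.sum_mul]
  rw [integral_finsetSum _ fun r _ => integrable_finsetSum _ fun s _ => hint r s]
  simp_rw [integral_finsetSum _ fun s _ => hint _ s,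
    hY.integral_inner_mul_inner_mul_inner_mul_inner_of_ne hYm hmean hkl]
  simp [Finset.sum_add_distrib, ite_and]

end Moments

end ProbabilityTheory

end RandomVectors

namespace PiLp

variable {ι : Type*} [Fintype ι] [DecidableEq ι] {H : ι → Type*}

lemma sum_single_apply [∀ i, NormedAddCommGroup (H i)] (x : PiLp 2 H) :
    ∑ t, single 2 t (x t) = x := by
  simp [← toLp_single, ← WithLp.toLp_sum, Finset.univ_sum_single]

variable {𝕜 : Type*} [RCLike 𝕜] [∀ i, NormedAddCommGroup (H i)] [∀ i, InnerProductSpace 𝕜 (H i)]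

lemma inner_single_left (t : ι) (v : H t) (x : PiLp 2 H) :
    inner 𝕜 (single 2 t v) x = inner 𝕜 v (x t) := by
  rw [PiLp.inner_apply, Finset.sum_eq_single t (fun r _ hr => by simp [Pi.single_eq_of_ne hr])
    (by simp), single_eq_same]

lemma inner_single_right (t : ι) (v : H t) (x : PiLp 2 H) :
    inner 𝕜 x (single 2 t v) = inner 𝕜 (x t) v := by
  rw [PiLp.inner_apply, Finset.sum_eq_single t (fun r _ hr => by simp [Pi.single_eq_of_ne hr])
    (by simp), single_eq_same]

end PiLp

section IndependentComponents

variable {ι Ω : Type*} [DecidableEq ι] {H : ι → Type*} [∀ i, NormedAddCommGroup (H i)]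
  [MeasurableSpace Ω] {μ : Measure Ω} {Z : Ω → PiLp 2 H}

lemma ProbabilityTheory.iIndepFun.piLp_single [∀ i, MeasurableSpace (H i)]
    (hZ : iIndepFun (fun k ω => Z ω k) μ) :
    iIndepFun (fun t ω => PiLp.single 2 t (Z ω t)) μ :=
  hZ.comp (fun t => PiLp.single 2 t) fun _ =>
    (WithLp.measurable_toLp 2 _).comp (measurable_update (0 : ∀ i, H i))

variable [Fintype ι]

lemma MeasureTheory.MemLp.piLp_single {q : ENNReal} (hZ : MemLp Z q μ) (t : ι) :
    MemLp (fun ω => PiLp.single 2 t (Z ω t)) q μ :=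
  hZ.of_le ((((PiLp.continuous_toLp 2 H).comp (continuous_single t)).comp
      (PiLp.continuous_apply 2 H t)).comp_aestronglyMeasurable hZ.1)
    (.of_forall fun ω => by simpa [PiLp.norm_single] using PiLp.norm_apply_le (Z ω) t)

variable [∀ i, InnerProductSpace ℝ (H i)] [∀ i, CompleteSpace (H i)]

lemma integral_inner_piLp_single_eq_zero (hZ : Integrable Z μ) (hmean : ∫ ω, Z ω ∂μ = 0)
    (t : ι) (a : PiLp 2 H) : ∫ ω, ⟪PiLp.single 2 t (Z ω t), a⟫ ∂μ = 0 := by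
  have h : ∀ ω, ⟪PiLp.single 2 t (Z ω t), a⟫ = ⟪PiLp.single 2 t (a t), Z ω⟫ := fun ω => by
    rw [PiLp.inner_single_left, PiLp.inner_single_left, real_inner_comm]
  simp_rw [h]
  rw [integral_inner hZ, hmean, inner_zero_right]

variable [∀ i, MeasurableSpace (H i)] [∀ i, BorelSpace (H i)] [∀ i, SecondCountableTopology (H i)]
  [IsProbabilityMeasure μ]

lemma integral_inner_apply_mul_inner_apply_eq_zero_of_ne (hZ : MemLp Z 1 μ)
    (hmean : ∫ ω, Z ω ∂μ = 0)
    (hindep : iIndepFun (fun k ω => Z ω k) μ) {k l : ι} (hkl : k ≠ l) (f : H k) (g : H l) :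
    ∫ ω, ⟪Z ω k, f⟫ * ⟪Z ω l, g⟫ ∂μ = 0 := by
  simpa [PiLp.inner_single_left] using hindep.piLp_single.integral_inner_mul_inner_eq_zero_of_ne
    (fun t => (hZ.piLp_single t).aestronglyMeasurable.aemeasurable)
    (integral_inner_piLp_single_eq_zero (hZ.integrable le_rfl) hmean) hkl
    (PiLp.single 2 k f) (PiLp.single 2 l g)

lemma integral_inner_mul_inner_apply (hZ : MemLp Z 2 μ) (hmean : ∫ ω, Z ω ∂μ = 0)
    (hindep : iIndepFun (fun k ω => Z ω k) μ) (a : PiLp 2 H) (t : ι) (v : H t) :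
    ∫ ω, ⟪Z ω, a⟫ * ⟪Z ω t, v⟫ ∂μ = ∫ ω, ⟪Z ω t, a t⟫ * ⟪Z ω t, v⟫ ∂μ := by
  simpa [PiLp.sum_single_apply, PiLp.inner_single_left] using
    hindep.piLp_single.integral_inner_sum_mul_inner hZ.piLp_single
      (integral_inner_piLp_single_eq_zero (hZ.integrable one_le_two) hmean) a (PiLp.single 2 t v) t

lemma integral_inner_mul_inner_mul_apply_of_ne (hZ : MemLp Z 4 μ) (hmean : ∫ ω, Z ω ∂μ = 0)
    (hindep : iIndepFun (fun k ω => Z ω k) μ) (a b : PiLp 2 H) {k l : ι} (hkl : k ≠ l)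
    (f : H k) (g : H l) :
    ∫ ω, ⟪Z ω, a⟫ * ⟪Z ω, b⟫ * (⟪Z ω k, f⟫ * ⟪Z ω l, g⟫) ∂μ =
      (∫ ω, ⟪Z ω k, a k⟫ * ⟪Z ω k, f⟫ ∂μ) * (∫ ω, ⟪Z ω l, b l⟫ * ⟪Z ω l, g⟫ ∂μ) +
      (∫ ω, ⟪Z ω l, a l⟫ * ⟪Z ω l, g⟫ ∂μ) * ∫ ω, ⟪Z ω k, b k⟫ * ⟪Z ω k, f⟫ ∂μ := by
  simpa [PiLp.sum_single_apply, PiLp.inner_single_left] using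
    hindep.piLp_single.integral_inner_sum_mul_inner_sum_mul_of_ne hZ.piLp_single
      (integral_inner_piLp_single_eq_zero (hZ.integrable (by norm_num)) hmean) hkl a b
      (PiLp.single 2 k f) (PiLp.single 2 l g)

variable {C : PiLp 2 H →L[ℝ] PiLp 2 H}

lemma apply_single_apply_eq_zero_of_covariance (hZ : MemLp Z 1 μ) (hmean : ∫ ω, Z ω ∂μ = 0)
    (hindep : iIndepFun (fun k ω => Z ω k) μ)
    (hC : ∀ f g, ⟪f, C g⟫ = ∫ ω, ⟪f, Z ω⟫ * ⟪Z ω, g⟫ ∂μ) {k l : ι} (hkl : k ≠ l) (g : H l) :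
    C (PiLp.single 2 l g) k = 0 := by
  refine ext_inner_left ℝ fun f => ?_
  rw [inner_zero_right, ← PiLp.inner_single_left, hC,
    ← integral_inner_apply_mul_inner_apply_eq_zero_of_ne hZ hmean hindep hkl f g]
  simp_rw [PiLp.inner_single_left, PiLp.inner_single_right, real_inner_comm f]

lemma integral_inner_apply_mul_inner_apply_of_covariance (hZ : MemLp Z 2 μ)
    (hmean : ∫ ω, Z ω ∂μ = 0) (hindep : iIndepFun (fun k ω => Z ω k) μ)
    (hC : ∀ f g, ⟪f, C g⟫ = ∫ ω, ⟪f, Z ω⟫ * ⟪Z ω, g⟫ ∂μ) {a : PiLp 2 H}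
    (ha : ∀ x, ⟪a, C x⟫ = ⟪a, x⟫) (t : ι) (v : H t) :
    ∫ ω, ⟪Z ω t, a t⟫ * ⟪Z ω t, v⟫ ∂μ = ⟪a t, v⟫ := by
  rw [← integral_inner_mul_inner_apply hZ hmean hindep, ← PiLp.inner_single_right, ← ha, hC]
  simp_rw [PiLp.inner_single_right, real_inner_comm a]

lemma apply_single_apply_of_fourth_moment (hZ : MemLp Z 4 μ) (hmean : ∫ ω, Z ω ∂μ = 0)
    (hindep : iIndepFun (fun k ω => Z ω k) μ)
    (hC : ∀ f g, ⟪f, C g⟫ = ∫ ω, ⟪f, Z ω⟫ * ⟪Z ω, g⟫ ∂μ) {a b : PiLp 2 H}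
    (ha : ∀ x, ⟪a, C x⟫ = ⟪a, x⟫) (hb : ∀ x, ⟪b, C x⟫ = ⟪b, x⟫) {T : PiLp 2 H →L[ℝ] PiLp 2 H}
    (hT : ∀ f g, ⟪f, T g⟫ = ∫ ω, ⟪Z ω, a⟫ * ⟪Z ω, b⟫ * (⟪Z ω, f⟫ * ⟪Z ω, g⟫) ∂μ)
    {k l : ι} (hkl : k ≠ l) (g : H l) :
    T (PiLp.single 2 l g) k = ⟪b l, g⟫ • a k + ⟪a l, g⟫ • b k := by
  have hZ2 : MemLp Z 2 μ := hZ.mono_exponent (by norm_num)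
  have hcova := integral_inner_apply_mul_inner_apply_of_covariance hZ2 hmean hindep hC ha
  have hcovb := integral_inner_apply_mul_inner_apply_of_covariance hZ2 hmean hindep hC hb
  refine ext_inner_left ℝ fun f => ?_
  rw [← PiLp.inner_single_left, hT]
  simp_rw [PiLp.inner_single_right]
  rw [integral_inner_mul_inner_mul_apply_of_ne hZ hmean hindep a b hkl, hcova, hcova, hcovb,
    hcovb, inner_add_right, real_inner_smul_right, real_inner_smul_right, real_inner_comm f,
    real_inner_comm f]
  ring

end IndependentComponents

lemma ContinuousLinearMap.comp_smulRight_comp_adjoint {𝕜 E F : Type*} [RCLike 𝕜]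
    [NormedAddCommGroup E] [InnerProductSpace 𝕜 E] [CompleteSpace E]
    [NormedAddCommGroup F] [InnerProductSpace 𝕜 F] [CompleteSpace F]
    (U : E →L[𝕜] F) (a b : E) :
    U ∘L ((innerSL 𝕜 a).smulRight b ∘L adjoint U) = (innerSL 𝕜 (U a)).smulRight (U b) := by
  ext x
  simp [adjoint_inner_right]

theorem stmt_19_general {p : ℕ} (H : Fin p → Type*)
    [∀ k, NormedAddCommGroup (H k)] [∀ k, InnerProductSpace ℝ (H k)]
    [∀ k, CompleteSpace (H k)] [∀ k, TopologicalSpace.SeparableSpace (H k)]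
    [∀ k, MeasurableSpace (H k)] [∀ k, BorelSpace (H k)]
    {Ω : Type*} [MeasurableSpace Ω]
    (μ : Measure Ω) [IsProbabilityMeasure μ]
    {d : ℕ} (M : Submodule ℝ (PiLp 2 H)) [FiniteDimensional ℝ M]
    (φ : Fin d → PiLp 2 H)
    (hspan : Submodule.span ℝ (Set.range φ) = M)
    (P : PiLp 2 H →L[ℝ] PiLp 2 H)
    (hP : P = M.subtypeL.comp (M.orthogonalProjectionOnto))
    (Z : Ω → PiLp 2 H)
    (hZ4 : MemLp Z 4 μ) (hmean : ∫ ω, Z ω ∂μ = 0)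
    -- the component functions `Z₁, ..., Zₚ` are mutually independent
    (hindep : iIndepFun (fun k ω => Z ω k) μ)
    -- `Z` is standardized: `Σ(Z) = P_{M_d}`
    (hstd : ∀ f g : PiLp 2 H, ⟪f, P g⟫ = ∫ ω, ⟪f, Z ω⟫ * ⟪Z ω, g⟫ ∂μ)
    -- `U` is unitary on `M_d`
    (U : PiLp 2 H →L[ℝ] PiLp 2 H)
    (hUP : U.comp P = U ∧ P.comp U = U)
    (hU : U.comp (ContinuousLinearMap.adjoint U) = P ∧
      (ContinuousLinearMap.adjoint U).comp U = P)
    (i j : Fin d)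
    -- `Mop = E{⟨UZ,φᵢ⟩⟨UZ,φⱼ⟩ (Z⊗Z)}`, defined weakly
    (Mop : PiLp 2 H →L[ℝ] PiLp 2 H)
    (hMop : ∀ f g : PiLp 2 H, ⟪f, Mop g⟫
      = ∫ ω, ⟪U (Z ω), φ i⟫ * ⟪U (Z ω), φ j⟫ * (⟪Z ω, f⟫ * ⟪Z ω, g⟫) ∂μ)
    -- `MopFull = E{⟨UZ,φᵢ⟩⟨UZ,φⱼ⟩ ((UZ)⊗(UZ))}`, defined weakly
    (MopFull : PiLp 2 H →L[ℝ] PiLp 2 H)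
    (hMopFull : ∀ f g : PiLp 2 H, ⟪f, MopFull g⟫
      = ∫ ω, ⟪U (Z ω), φ i⟫ * ⟪U (Z ω), φ j⟫ * (⟪U (Z ω), f⟫ * ⟪U (Z ω), g⟫) ∂μ) :
    -- the `(k,l)` off-diagonal entry of `Mop` is `ξ_{ik} ⊗ ξ_{jl} + ξ_{jk} ⊗ ξ_{il}`
    (∀ k l : Fin p, k ≠ l → ∀ g : H l,
      Mop ((WithLp.equiv 2 (∀ r, H r)).symm (Pi.single l g)) k
        = ⟪(ContinuousLinearMap.adjoint U) (φ j) l, g⟫ •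
            (ContinuousLinearMap.adjoint U) (φ i) k
          + ⟪(ContinuousLinearMap.adjoint U) (φ i) l, g⟫ •
              (ContinuousLinearMap.adjoint U) (φ j) k) ∧
    -- consequently `C^{ij}(UZ) = U D^{ij} U*` with `D^{ij}` diagonal
    ∃ D : PiLp 2 H →L[ℝ] PiLp 2 H,
      (∀ k l : Fin p, k ≠ l → ∀ g : H l,
        D ((WithLp.equiv 2 (∀ r, H r)).symm (Pi.single l g)) k = 0) ∧
      MopFull - (if i = j then (1 : ℝ) else 0) • P
          - (innerSL ℝ (φ j)).smulRight (φ i)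
          - (innerSL ℝ (φ i)).smulRight (φ j)
        = U.comp (D.comp (ContinuousLinearMap.adjoint U)) := by
  have hξP : ∀ a x, ⟪adjoint U (φ a), P x⟫ = ⟪adjoint U (φ a), x⟫ := fun a x => by
    rw [adjoint_inner_left, adjoint_inner_left, ← comp_apply, hUP.1]
  have hUξ : ∀ a, U (adjoint U (φ a)) = φ a := fun a => by
    rw [← comp_apply, hU.1, hP]
    exact M.starProjection_eq_self_iff.2 (hspan ▸ Submodule.subset_span ⟨a, rfl⟩)
  have hentry := fun k l (hkl : k ≠ l) g =>
    apply_single_apply_of_fourth_moment hZ4 hmean hindep hstd (hξP i) (hξP j) (T := Mop)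
      (fun f g => by simpa only [adjoint_inner_right] using hMop f g) hkl g
  have hconj : MopFull = U ∘L (Mop ∘L adjoint U) := by
    refine ContinuousLinearMap.ext fun g => ext_inner_left ℝ fun f => ?_
    rw [comp_apply, comp_apply, ← adjoint_inner_left U, hMop, hMopFull]
    simp_rw [adjoint_inner_right]
  refine ⟨hentry, Mop - (if i = j then (1 : ℝ) else 0) • P
    - (innerSL ℝ (adjoint U (φ j))).smulRight (adjoint U (φ i))
    - (innerSL ℝ (adjoint U (φ i))).smulRight (adjoint U (φ j)), fun k l hkl g => ?_, ?_⟩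
  · have hP0 := apply_single_apply_eq_zero_of_covariance (hZ4.mono_exponent (by norm_num)) hmean
      hindep hstd hkl g
    simp only [WithLp.equiv_symm_apply, PiLp.toLp_single, sub_apply, smul_apply, smulRight_apply,
      innerSL_apply_apply, PiLp.sub_apply, PiLp.smul_apply, hentry k l hkl g, hP0, smul_zero,
      sub_zero, PiLp.inner_single_right]
    abel
  · simp only [hconj, sub_comp, comp_sub, smul_comp, comp_smul, comp_smulRight_comp_adjoint, hUξ]
    rw [← comp_assoc U P, hUP.1, hU.1]

/-- For a standardized zero-mean `Z` with independent components
in the `d`-dimensional subspace `M_d` and a unitary `U` on `M_d`, the `(k,l)`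
off-diagonal (`k ≠ l`) entry of `E{⟨UZ,φᵢ⟩⟨UZ,φⱼ⟩(Z⊗Z)}` equals
`(ξ_{ik} ⊗ ξ_{jl}) + (ξ_{jk} ⊗ ξ_{il})` where `ξᵢ = U*φᵢ`; consequently
`C^{ij}(UZ) = U D^{ij} U*` for a diagonal matrix of operators `D^{ij}`. -/
theorem stmt_19 {p : ℕ} (H : Fin p → Type*)
    [∀ k, NormedAddCommGroup (H k)] [∀ k, InnerProductSpace ℝ (H k)]
    [∀ k, CompleteSpace (H k)] [∀ k, TopologicalSpace.SeparableSpace (H k)]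
    [∀ k, MeasurableSpace (H k)] [∀ k, BorelSpace (H k)]
    {Ω : Type*} [MeasurableSpace Ω]
    (μ : Measure Ω) [IsProbabilityMeasure μ]
    {d : ℕ} (M : Submodule ℝ (PiLp 2 H)) [FiniteDimensional ℝ M]
    (φ : Fin d → PiLp 2 H) (hφ : Orthonormal ℝ φ)
    (hspan : Submodule.span ℝ (Set.range φ) = M)
    (P : PiLp 2 H →L[ℝ] PiLp 2 H)
    (hP : P = M.subtypeL.comp (M.orthogonalProjectionOnto))
    (Z : Ω → PiLp 2 H)
    (hZ4 : MemLp Z 4 μ) (hmean : ∫ ω, Z ω ∂μ = 0)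
    (hZM : ∀ ω, Z ω ∈ M)
    -- the component functions `Z₁, ..., Zₚ` are mutually independent
    (hindep : iIndepFun (fun k ω => Z ω k) μ)
    -- `Z` is standardized: `Σ(Z) = P_{M_d}`
    (hstd : ∀ f g : PiLp 2 H, ⟪f, P g⟫ = ∫ ω, ⟪f, Z ω⟫ * ⟪Z ω, g⟫ ∂μ)
    -- `U` is unitary on `M_d`
    (U : PiLp 2 H →L[ℝ] PiLp 2 H)
    (hUP : U.comp P = U ∧ P.comp U = U)
    (hU : U.comp (ContinuousLinearMap.adjoint U) = P ∧
      (ContinuousLinearMap.adjoint U).comp U = P)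
    (i j : Fin d)
    -- `Mop = E{⟨UZ,φᵢ⟩⟨UZ,φⱼ⟩ (Z⊗Z)}`, defined weakly
    (Mop : PiLp 2 H →L[ℝ] PiLp 2 H)
    (hMop : ∀ f g : PiLp 2 H, ⟪f, Mop g⟫
      = ∫ ω, ⟪U (Z ω), φ i⟫ * ⟪U (Z ω), φ j⟫ * (⟪Z ω, f⟫ * ⟪Z ω, g⟫) ∂μ)
    -- `MopFull = E{⟨UZ,φᵢ⟩⟨UZ,φⱼ⟩ ((UZ)⊗(UZ))}`, defined weakly
    (MopFull : PiLp 2 H →L[ℝ] PiLp 2 H)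
    (hMopFull : ∀ f g : PiLp 2 H, ⟪f, MopFull g⟫
      = ∫ ω, ⟪U (Z ω), φ i⟫ * ⟪U (Z ω), φ j⟫ * (⟪U (Z ω), f⟫ * ⟪U (Z ω), g⟫) ∂μ) :
    -- the `(k,l)` off-diagonal entry of `Mop` is `ξ_{ik} ⊗ ξ_{jl} + ξ_{jk} ⊗ ξ_{il}`
    (∀ k l : Fin p, k ≠ l → ∀ g : H l,
      Mop ((WithLp.equiv 2 (∀ r, H r)).symm (Pi.single l g)) k
        = ⟪(ContinuousLinearMap.adjoint U) (φ j) l, g⟫ •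
            (ContinuousLinearMap.adjoint U) (φ i) k
          + ⟪(ContinuousLinearMap.adjoint U) (φ i) l, g⟫ •
              (ContinuousLinearMap.adjoint U) (φ j) k) ∧
    -- consequently `C^{ij}(UZ) = U D^{ij} U*` with `D^{ij}` diagonal
    ∃ D : PiLp 2 H →L[ℝ] PiLp 2 H,
      (∀ k l : Fin p, k ≠ l → ∀ g : H l,
        D ((WithLp.equiv 2 (∀ r, H r)).symm (Pi.single l g)) k = 0) ∧
      MopFull - (if i = j then (1 : ℝ) else 0) • P
          - (innerSL ℝ (φ j)).smulRight (φ i)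
          - (innerSL ℝ (φ i)).smulRight (φ j)
        = U.comp (D.comp (ContinuousLinearMap.adjoint U)) :=
  stmt_19_general H μ M φ hspan P hP Z hZ4 hmean hindep hstd U hUP hU i j Mop hMop MopFull hMopFull
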